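/- Let ρ be a nonzero finite Borel measure on (0,∞) with Laplace transform F = R_ρ, and let g be a probability density on ℝ with ∫_ℝ e^{sy} g(y) dy < ∞ for every s ∈ ℝ, such that (F * g)(x) < ∞ for every x ∈ ℝ. Set G = 𝒩(F * g). Then for every integer n ≥ 1, ∫_ℝ (G(t)^n / n!) e^{−G(t)} dt ≤ ∫_ℝ (F(t)^n / n!) e^{−F(t)} dt (as an inequality in [0,∞]). (These integrals equal the expected size of the gap x_n − x_{n+1} between the n-th and (n+1)-st largest points of the Poisson processes with intensity measures −dG and −dF, respectively.) -/

import Mathlib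

open MeasureTheory Filter Set
open scoped ENNReal

/-- Laplace transform of a finite Borel measure on `[0,∞)` (value `+∞` allowed). -/
noncomputable def laplaceT (ρ : Measure ℝ) (x : ℝ) : ℝ≥0∞ :=
  ∫⁻ u, ENNReal.ofReal (Real.exp (-(x * u))) ∂ρ

/-- Convolution `(F * g)(x) = ∫ F(x-y) g(y) dy` of an `[0,∞]`-valued function with a density. -/
noncomputable def convT (F : ℝ → ℝ≥0∞) (g : ℝ → ℝ) (x : ℝ) : ℝ≥0∞ :=
  ∫⁻ y, F (x - y) * ENNReal.ofReal (g y)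

/-- The normalizing shift `𝒩F(x) = F(x + z_F)` with `z_F = sup {z : F z ≥ 1}`. -/
noncomputable def normShiftT (F : ℝ → ℝ≥0∞) (x : ℝ) : ℝ≥0∞ :=
  F (x + sSup {z : ℝ | 1 ≤ F z})

/-- The expected gap `E(x_n - x_{n+1})` between the `n`-th and `(n+1)`-st largest points of
the Poisson process with intensity `-dF`, namely `∫_ℝ (F(t)^n / n!) e^{-F(t)} dt`
(with the convention that the integrand vanishes where `F = ∞`, via `ENNReal.toReal`). -/
noncomputable def expGap (F : ℝ → ℝ≥0∞) (n : ℕ) : ℝ≥0∞ :=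
  ∫⁻ t : ℝ, ENNReal.ofReal ((F t).toReal ^ n / (Nat.factorial n) * Real.exp (-(F t).toReal))

private lemma W_holder (g : ℝ → ℝ) (hg_meas : Measurable g) (hg_nonneg : ∀ y, 0 ≤ g y)
    (hg1 : (∫⁻ y, ENNReal.ofReal (g y)) = 1) {u w : ℝ} (hu : 0 < u) (huw : u < w) :
    (∫⁻ y, ENNReal.ofReal (Real.exp (u * y) * g y)) ≤
      (∫⁻ y, ENNReal.ofReal (Real.exp (w * y) * g y)) ^ (u / w) := by
  set θ : ℝ := u / w with hθdef
  have hw : (0:ℝ) < w := hu.trans huw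
  have hθ0 : 0 < θ := div_pos hu hw
  have hθ1 : θ < 1 := (div_lt_one hw).2 huw
  have hpq : Real.HolderConjugate (1/θ) (1/(1-θ)) := by
    rw [Real.holderConjugate_iff]
    constructor
    · rw [lt_div_iff₀ hθ0]; linarith
    · rw [one_div, one_div, inv_inv, inv_inv]; ring
  have hf : AEMeasurable (fun y => ENNReal.ofReal (Real.exp (w * y) * g y) ^ θ) volume := by
    apply Measurable.aemeasurable
    apply Measurable.pow_const
    exact (((Real.measurable_exp.comp (measurable_const.mul measurable_id)).mul hg_meas)).ennreal_ofReal
  have hh : AEMeasurable (fun y => ENNReal.ofReal (g y) ^ (1-θ)) volume := by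
    apply Measurable.aemeasurable
    exact hg_meas.ennreal_ofReal.pow_const _
  have key := ENNReal.lintegral_mul_le_Lp_mul_Lq volume hpq hf hh
  have hptw : ∀ y : ℝ, ENNReal.ofReal (Real.exp (u * y) * g y)
      = ENNReal.ofReal (Real.exp (w * y) * g y) ^ θ * ENNReal.ofReal (g y) ^ (1-θ) := by
    intro y
    rw [ENNReal.ofReal_rpow_of_nonneg (mul_nonneg (Real.exp_pos _).le (hg_nonneg y)) hθ0.le,
      ENNReal.ofReal_rpow_of_nonneg (hg_nonneg y) (by linarith), ← ENNReal.ofReal_mul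
      (Real.rpow_nonneg (mul_nonneg (Real.exp_pos _).le (hg_nonneg y)) _)]
    congr 1
    rw [Real.mul_rpow (Real.exp_pos _).le (hg_nonneg y), mul_assoc,
      ← Real.rpow_add' (hg_nonneg y) (by norm_num), ← Real.exp_mul]
    have : w * y * θ = u * y := by
      rw [hθdef]
      field_simp
    rw [this, add_sub_cancel, Real.rpow_one]
  calc (∫⁻ y, ENNReal.ofReal (Real.exp (u * y) * g y))
      = ∫⁻ y, (fun a => ENNReal.ofReal (Real.exp (w * a) * g a) ^ θ) y *
          (fun a => ENNReal.ofReal (g a) ^ (1-θ)) y := by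
        apply lintegral_congr; intro y; exact hptw y
    _ ≤ (∫⁻ y, (ENNReal.ofReal (Real.exp (w * y) * g y) ^ θ) ^ (1/θ)) ^ (1/(1/θ)) *
        (∫⁻ y, (ENNReal.ofReal (g y) ^ (1-θ)) ^ (1/(1-θ))) ^ (1/(1/(1-θ))) := key
    _ = (∫⁻ y, ENNReal.ofReal (Real.exp (w * y) * g y)) ^ θ *
        (∫⁻ y, ENNReal.ofReal (g y)) ^ (1-θ) := by
        rw [one_div_one_div, one_div_one_div]
        congr 1
        · congr 1
          · apply lintegral_congr; intro y
            rw [← ENNReal.rpow_mul, mul_one_div, div_self hθ0.ne', ENNReal.rpow_one]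
        · congr 1
          apply lintegral_congr; intro y
          rw [← ENNReal.rpow_mul, mul_one_div, div_self (by linarith : (1:ℝ)-θ ≠ 0), ENNReal.rpow_one]
    _ = (∫⁻ y, ENNReal.ofReal (Real.exp (w * y) * g y)) ^ θ := by
        rw [hg1, ENNReal.one_rpow, mul_one]

private lemma W_downclosed (g : ℝ → ℝ) (hg_meas : Measurable g) (hg_nonneg : ∀ y, 0 ≤ g y)
    (hg1 : (∫⁻ y, ENNReal.ofReal (g y)) = 1) (c : ℝ) {u w : ℝ} (hu : 0 < u) (huw : u ≤ w)
    (hw : (∫⁻ y, ENNReal.ofReal (Real.exp (w * y) * g y)) ≤ ENNReal.ofReal (Real.exp (c * w))) :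
    (∫⁻ y, ENNReal.ofReal (Real.exp (u * y) * g y)) ≤ ENNReal.ofReal (Real.exp (c * u)) := by
  rcases eq_or_lt_of_le huw with rfl | hlt
  · exact hw
  have hw0 : (0:ℝ) < w := hu.trans hlt
  calc (∫⁻ y, ENNReal.ofReal (Real.exp (u * y) * g y))
      ≤ (∫⁻ y, ENNReal.ofReal (Real.exp (w * y) * g y)) ^ (u / w) :=
        W_holder g hg_meas hg_nonneg hg1 hu hlt
    _ ≤ (ENNReal.ofReal (Real.exp (c * w))) ^ (u / w) := by
        exact ENNReal.rpow_le_rpow hw (div_nonneg hu.le hw0.le)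
    _ = ENNReal.ofReal (Real.exp (c * u)) := by
        rw [ENNReal.ofReal_rpow_of_pos (Real.exp_pos _), ← Real.exp_mul]
        congr 1
        field_simp

private lemma prop_lemma (ρ : Measure ℝ) (hρsupp : ρ (Set.Iic 0) = 0)
    {A B : ℝ → ℝ≥0∞} (hA : Measurable A) (hB : Measurable B)
    (ustar : ℝ)
    (hcross : ∀ u : ℝ, 0 < u → (u < ustar → A u ≤ B u) ∧ (ustar < u → B u ≤ A u))
    (hAB : ∫⁻ u, A u ∂ρ ≤ ∫⁻ u, B u ∂ρ) (hBfin : ∫⁻ u, B u ∂ρ ≠ ⊤)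
    {δ : ℝ} (hδ : 0 ≤ δ) :
    ∫⁻ u, ENNReal.ofReal (Real.exp (-(δ * u))) * A u ∂ρ
      ≤ ∫⁻ u, ENNReal.ofReal (Real.exp (-(δ * u))) * B u ∂ρ := by
  set κ : ℝ → ℝ≥0∞ := fun u => ENNReal.ofReal (Real.exp (-(δ * u))) with hκ
  set κs : ℝ≥0∞ := ENNReal.ofReal (Real.exp (-(δ * ustar))) with hκs
  have hae : ∀ᵐ u ∂ρ, 0 < u := by
    rw [ae_iff]
    refine measure_mono_null ?_ hρsupp
    intro u hu
    simp only [mem_setOf_eq, not_lt] at hu ⊢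
    exact hu
  have hκmeas : Measurable κ := by
    exact (Real.measurable_exp.comp ((measurable_const.mul measurable_id).neg)).ennreal_ofReal
  have hptw : ∀ᵐ u ∂ρ, κ u * A u + κs * B u ≤ κ u * B u + κs * A u := by
    filter_upwards [hae] with u hu
    rcases lt_trichotomy u ustar with h | rfl | h
    · -- A u ≤ B u, κs ≤ κ u
      have hAB' : A u ≤ B u := (hcross u hu).1 h
      have hsub : κ u = ENNReal.ofReal (Real.exp (-(δ * u)) - Real.exp (-(δ * ustar))) + κs := by
        rw [hκ, hκs, ← ENNReal.ofReal_add
          (sub_nonneg.2 (Real.exp_le_exp.2 (by nlinarith : -(δ * ustar) ≤ -(δ * u))))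
          (Real.exp_pos _).le, sub_add_cancel]
      set d := ENNReal.ofReal (Real.exp (-(δ * u)) - Real.exp (-(δ * ustar)))
      rw [hsub]
      have h1 : d * A u ≤ d * B u := mul_le_mul_right hAB' d
      calc (d + κs) * A u + κs * B u = d * A u + (κs * A u + κs * B u) := by ring
        _ ≤ d * B u + (κs * A u + κs * B u) := by exact add_le_add_left h1 _
        _ = (d + κs) * B u + κs * A u := by ring
    · have : κ u = κs := by rw [hκs]
      rw [this]
      exact le_of_eq (by ring)
    · have hBA : B u ≤ A u := (hcross u hu).2 h
      have hsub : κs = ENNReal.ofReal (Real.exp (-(δ * ustar)) - Real.exp (-(δ * u))) + κ u := by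
        rw [hκ, hκs, ← ENNReal.ofReal_add
          (sub_nonneg.2 (Real.exp_le_exp.2 (by nlinarith : -(δ * u) ≤ -(δ * ustar))))
          (Real.exp_pos _).le, sub_add_cancel]
      set d := ENNReal.ofReal (Real.exp (-(δ * ustar)) - Real.exp (-(δ * u)))
      rw [hsub]
      have h1 : d * B u ≤ d * A u := mul_le_mul_right hBA d
      calc κ u * A u + (d + κ u) * B u = d * B u + (κ u * A u + κ u * B u) := by ring
        _ ≤ d * A u + (κ u * A u + κ u * B u) := by exact add_le_add_left h1 _
        _ = κ u * B u + (d + κ u) * A u := by ring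
  have hint : ∫⁻ u, (κ u * A u + κs * B u) ∂ρ ≤ ∫⁻ u, (κ u * B u + κs * A u) ∂ρ :=
    lintegral_mono_ae hptw
  rw [lintegral_add_left (f := fun u => κ u * A u) (hκmeas.mul hA),
    lintegral_add_left (f := fun u => κ u * B u) (hκmeas.mul hB),
    lintegral_const_mul κs hB, lintegral_const_mul κs hA] at hint
  have h2 : ∫⁻ u, κ u * A u ∂ρ + κs * ∫⁻ u, B u ∂ρ
      ≤ ∫⁻ u, κ u * B u ∂ρ + κs * ∫⁻ u, B u ∂ρ :=
    hint.trans (add_le_add_right (mul_le_mul_right hAB κs) _)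
  exact (ENNReal.add_le_add_iff_right (ENNReal.mul_ne_top ENNReal.ofReal_ne_top hBfin)).1 h2

private lemma core_measure {F G : ℝ → ℝ≥0∞}
    (hF_anti : Antitone F) (hG_anti : Antitone G)
    (hF_strict : ∀ ⦃x y : ℝ⦄, x < y → F y < F x)
    (hF_small : ∀ β : ℝ≥0∞, β ≠ 0 → ∃ x, F x < β)
    (hF_big : ∀ β : ℝ≥0∞, β ≠ ⊤ → ∃ x₀ : ℝ, ∀ x ≤ x₀, β ≤ F x)
    (hG_small : ∀ β : ℝ≥0∞, β ≠ 0 → ∃ t, G t < β)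
    (hG_big : ∀ β : ℝ≥0∞, β ≠ ⊤ → ∃ t, β < G t)
    (hprop : ∀ t s : ℝ, G t ≤ F s → ∀ d : ℝ, 0 ≤ d → G (t + d) ≤ F (s + d))
    {a b : ℝ} (ha : 0 < a) (hab : a ≤ b) :
    volume {t | ENNReal.ofReal a ≤ G t ∧ G t ≤ ENNReal.ofReal b}
      ≤ volume {t | ENNReal.ofReal a < F t ∧ F t < ENNReal.ofReal b} := by
  set L := {t | ENNReal.ofReal a ≤ G t ∧ G t ≤ ENNReal.ofReal b} with hLdef
  set R := {t | ENNReal.ofReal a < F t ∧ F t < ENNReal.ofReal b} with hRdef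
  rcases L.eq_empty_or_nonempty with hLe | hLne
  · rw [hLe]; simp
  have ha' : ENNReal.ofReal a ≠ 0 := (ENNReal.ofReal_pos.2 ha).ne'
  have hb' : ENNReal.ofReal b ≠ 0 := (ENNReal.ofReal_pos.2 (ha.trans_le hab)).ne'
  obtain ⟨tp, htp⟩ := hG_small (ENNReal.ofReal a) ha'
  obtain ⟨tm, htm⟩ := hG_big (ENNReal.ofReal b) ENNReal.ofReal_ne_top
  have hLbddA : BddAbove L := by
    refine ⟨tp, fun t ht => ?_⟩
    by_contra hc
    push_neg at hc
    exact absurd (ht.1.trans (hG_anti hc.le)) (not_le.2 htp)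
  have hLbddB : BddBelow L := by
    refine ⟨tm, fun t ht => ?_⟩
    by_contra hc
    push_neg at hc
    exact absurd ((hG_anti hc.le).trans ht.2) (not_le.2 htm)
  set i := sInf L with hidef
  set s := sSup L with hsdef
  have hLIcc : L ⊆ Icc i s := fun t ht => ⟨csInf_le hLbddB ht, le_csSup hLbddA ht⟩
  have hvolL : volume L ≤ ENNReal.ofReal (s - i) := by
    calc volume L ≤ volume (Icc i s) := measure_mono hLIcc
      _ = ENNReal.ofReal (s - i) := Real.volume_Icc
  -- the pair claim
  have hpair : ∀ t₁ ∈ L, ∀ t₂ ∈ L, ∀ η : ℝ, 0 < η →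
      ENNReal.ofReal (t₂ - t₁ - η) ≤ volume R := by
    intro t₁ h1 t₂ h2 η hη
    rcases le_or_gt (t₂ - t₁ - η) 0 with hle | hpos
    · rw [ENNReal.ofReal_eq_zero.2 hle]; exact zero_le
    have hβ'0 : G t₁ ≠ 0 := fun h => ha' (le_antisymm (h ▸ h1.1) (zero_le))
    obtain ⟨x₀, hx₀⟩ := hF_big (ENNReal.ofReal b) ENNReal.ofReal_ne_top
    set S' := {σ : ℝ | F σ < G t₁} with hS'def
    have hS'ne : S'.Nonempty := hF_small _ hβ'0
    have hS'bdd : BddBelow S' := by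
      refine ⟨x₀, fun σ hσ => ?_⟩
      by_contra hc
      push_neg at hc
      exact absurd ((h1.2.trans (hx₀ σ hc.le)).trans_lt' hσ) (lt_irrefl _)
    set Sb := {σ : ℝ | F σ < ENNReal.ofReal b} with hSbdef
    have hSbne : Sb.Nonempty := hF_small _ hb'
    have hSbbdd : BddBelow Sb := by
      refine ⟨x₀, fun σ hσ => ?_⟩
      by_contra hc
      push_neg at hc
      exact absurd (hσ.trans_le (hx₀ σ hc.le)) (lt_irrefl _)
    set s' := sInf S' with hs'def
    set s₂ := sInf Sb with hs2def
    have hS'Sb : S' ⊆ Sb := fun σ hσ => hσ.trans_le h1.2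
    have hs2s' : s₂ ≤ s' := csInf_le_csInf hSbbdd hS'ne hS'Sb
    have hFb : ∀ σ, s₂ < σ → F σ < ENNReal.ofReal b := by
      intro σ h
      obtain ⟨x, hx, hxσ⟩ := exists_lt_of_csInf_lt hSbne h
      exact (hF_anti hxσ.le).trans_lt hx
    have hFs : G t₁ ≤ F (s' - η) := by
      by_contra h
      push_neg at h
      have : s' ≤ s' - η := csInf_le hS'bdd h
      linarith
    have hd : (0:ℝ) ≤ t₂ - t₁ := by linarith
    have hGt2 := hprop t₁ (s' - η) hFs (t₂ - t₁) hd
    rw [add_sub_cancel] at hGt2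
    have hkey : ENNReal.ofReal a ≤ F (s' - η + (t₂ - t₁)) := h2.1.trans hGt2
    have hsub : Ioo s₂ (s' - η + (t₂ - t₁)) ⊆ R := by
      intro σ hσ
      exact ⟨hkey.trans_lt (hF_strict hσ.2), hFb σ hσ.1⟩
    calc ENNReal.ofReal (t₂ - t₁ - η)
        ≤ ENNReal.ofReal ((s' - η + (t₂ - t₁)) - s₂) := ENNReal.ofReal_le_ofReal (by linarith)
      _ = volume (Ioo s₂ (s' - η + (t₂ - t₁))) := Real.volume_Ioo.symm
      _ ≤ volume R := measure_mono hsub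
  -- conclude via epsilon argument
  apply ENNReal.le_of_forall_pos_le_add
  intro ε hε hRfin
  set εr : ℝ := (ε : ℝ) with hεrdef
  have hεr : 0 < εr := hε
  obtain ⟨t₂, ht₂L, ht₂⟩ := exists_lt_of_lt_csSup hLne (show s - εr/4 < s by linarith)
  obtain ⟨t₁, ht₁L, ht₁⟩ := exists_lt_of_csInf_lt hLne (show i < i + εr/4 by linarith)
  have hp := hpair t₁ ht₁L t₂ ht₂L (εr/4) (by positivity)
  calc volume L ≤ ENNReal.ofReal (s - i) := hvolL
    _ ≤ ENNReal.ofReal ((t₂ - t₁ - εr/4) + 3*(εr/4)) := ENNReal.ofReal_le_ofReal (by linarith)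
    _ ≤ ENNReal.ofReal (t₂ - t₁ - εr/4) + ENNReal.ofReal (3*(εr/4)) := ENNReal.ofReal_add_le
    _ ≤ volume R + ↑ε := by
        refine add_le_add hp ?_
        rw [← ENNReal.ofReal_coe_nnreal]
        exact ENNReal.ofReal_le_ofReal (by linarith)

private lemma conv_rep (ρ : Measure ℝ) [IsFiniteMeasure ρ] (g : ℝ → ℝ) (hg_meas : Measurable g)
    (x : ℝ) :
    convT (laplaceT ρ) g x
      = ∫⁻ u, ENNReal.ofReal (Real.exp (-(x*u)))
          * (∫⁻ y, ENNReal.ofReal (Real.exp (u * y) * g y)) ∂ρ := by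
  unfold convT laplaceT
  have hmeas : Measurable (Function.uncurry fun y u =>
      ENNReal.ofReal (Real.exp (-((x - y) * u))) * ENNReal.ofReal (g y)) := by
    refine Measurable.mul (f := fun p : ℝ × ℝ => ENNReal.ofReal (Real.exp (-((x - p.1) * p.2))))
      (g := fun p : ℝ × ℝ => ENNReal.ofReal (g p.1)) ?_ ?_
    · apply Measurable.ennreal_ofReal
      apply Real.measurable_exp.comp
      exact ((measurable_const.sub measurable_fst).mul measurable_snd).neg
    · exact (hg_meas.comp measurable_fst).ennreal_ofReal
  calc ∫⁻ y, (∫⁻ u, ENNReal.ofReal (Real.exp (-((x - y) * u))) ∂ρ) * ENNReal.ofReal (g y)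
      = ∫⁻ y, ∫⁻ u, ENNReal.ofReal (Real.exp (-((x - y) * u))) * ENNReal.ofReal (g y) ∂ρ := by
        apply lintegral_congr; intro y
        rw [lintegral_mul_const]
        exact (Real.measurable_exp.comp ((measurable_const.mul measurable_id).neg)).ennreal_ofReal
    _ = ∫⁻ u, (∫⁻ y, ENNReal.ofReal (Real.exp (-((x - y) * u))) * ENNReal.ofReal (g y)) ∂ρ := by
        exact lintegral_lintegral_swap hmeas.aemeasurable
    _ = ∫⁻ u, ENNReal.ofReal (Real.exp (-(x*u)))
          * (∫⁻ y, ENNReal.ofReal (Real.exp (u * y) * g y)) ∂ρ := by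
        apply lintegral_congr; intro u
        rw [← lintegral_const_mul]
        · apply lintegral_congr; intro y
          rw [← ENNReal.ofReal_mul (Real.exp_pos _).le, ← ENNReal.ofReal_mul (Real.exp_pos _).le]
          rw [← mul_assoc, ← Real.exp_add]
          congr 3
          ring
        · exact ((Real.measurable_exp.comp (measurable_const.mul measurable_id)).mul
            hg_meas).ennreal_ofReal

private lemma phi_hasDeriv (n : ℕ) (v : ℝ) :
    HasDerivAt (fun x : ℝ => x ^ n * Real.exp (-x))
      ((n * v ^ (n-1) - v ^ n) * Real.exp (-v)) v := by
  have h1 : HasDerivAt (fun x : ℝ => x ^ n) ((n:ℝ) * v ^ (n-1)) v := hasDerivAt_pow n v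
  have h2 : HasDerivAt (fun x : ℝ => Real.exp (-x)) (-Real.exp (-v)) v := by
    simpa using (hasDerivAt_neg v).exp
  have := h1.mul h2
  exact this.congr_deriv (by ring)

private lemma phi_quasi {n : ℕ} (hn : 1 ≤ n) {v₁ v v₂ : ℝ} (h0 : 0 ≤ v₁) (h1 : v₁ ≤ v)
    (h2 : v ≤ v₂) {lam : ℝ}
    (hl1 : lam < v₁ ^ n * Real.exp (-v₁)) (hl2 : lam < v₂ ^ n * Real.exp (-v₂)) :
    lam < v ^ n * Real.exp (-v) := by
  have hpow : ∀ w : ℝ, 0 ≤ w → w ^ n = w ^ (n-1) * w := by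
    intro w _
    rw [← pow_succ, Nat.sub_add_cancel hn]
  rcases le_total v n with hv | hv
  · have hmono : MonotoneOn (fun x : ℝ => x ^ n * Real.exp (-x)) (Icc 0 (n:ℝ)) := by
      apply monotoneOn_of_deriv_nonneg (convex_Icc _ _)
      · exact ((continuous_pow n).mul (Real.continuous_exp.comp continuous_neg)).continuousOn
      · intro x hx
        exact (phi_hasDeriv n x).differentiableAt.differentiableWithinAt
      · intro x hx
        rw [interior_Icc, mem_Ioo] at hx
        rw [(phi_hasDeriv n x).deriv]
        apply mul_nonneg _ (Real.exp_pos _).le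
        rw [hpow x hx.1.le]
        nlinarith [pow_nonneg hx.1.le (n-1)]
    exact hl1.trans_le (hmono ⟨h0, by linarith⟩ ⟨h0.trans h1, hv⟩ h1)
  · have hanti : AntitoneOn (fun x : ℝ => x ^ n * Real.exp (-x)) (Ici (n:ℝ)) := by
      apply antitoneOn_of_deriv_nonpos (convex_Ici _)
      · exact ((continuous_pow n).mul (Real.continuous_exp.comp continuous_neg)).continuousOn
      · intro x hx
        exact (phi_hasDeriv n x).differentiableAt.differentiableWithinAt
      · intro x hx
        rw [interior_Ici, mem_Ioi] at hx
        have hn0 : (0:ℝ) < n := by exact_mod_cast Nat.lt_of_lt_of_le Nat.zero_lt_one hn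
        have hx0 : (0:ℝ) < x := hn0.trans hx
        rw [(phi_hasDeriv n x).deriv]
        apply mul_nonpos_of_nonpos_of_nonneg _ (Real.exp_pos _).le
        rw [hpow x hx0.le]
        nlinarith [pow_nonneg hx0.le (n-1)]
    exact hl2.trans_le (hanti (mem_Ici.2 hv) (mem_Ici.2 (by linarith)) h2)

private lemma level_set_interval {n : ℕ} (hn : 1 ≤ n) {lam : ℝ} (hlam : 0 < lam)
    (hS : {v : ℝ | 0 ≤ v ∧ lam < v ^ n * Real.exp (-v)}.Nonempty) :
    ∃ A B : ℝ, 0 < A ∧ A ≤ B ∧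
      {v : ℝ | 0 ≤ v ∧ lam < v ^ n * Real.exp (-v)} ⊆ Icc A B ∧
      Ioo A B ⊆ {v : ℝ | 0 ≤ v ∧ lam < v ^ n * Real.exp (-v)} := by
  set S := {v : ℝ | 0 ≤ v ∧ lam < v ^ n * Real.exp (-v)} with hSdef
  -- bounded above
  obtain ⟨V, hV⟩ := (Real.tendsto_pow_mul_exp_neg_atTop_nhds_zero n).eventually_lt_const hlam
    |>.exists_forall_of_atTop
  have hbddA : BddAbove S := by
    refine ⟨V, fun v hv => ?_⟩
    by_contra hc
    push_neg at hc
    exact absurd (hV v hc.le) (not_lt.2 hv.2.le)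
  -- bounded below positively
  have hcont : Tendsto (fun x : ℝ => x ^ n * Real.exp (-x)) (nhds 0) (nhds 0) := by
    have := (((continuous_pow n).mul (Real.continuous_exp.comp continuous_neg)).tendsto 0 :
      Tendsto (fun x : ℝ => x ^ n * Real.exp (-x)) (nhds 0) (nhds ((0:ℝ) ^ n * Real.exp (-0))))
    simpa [zero_pow (Nat.one_le_iff_ne_zero.1 hn)]
  obtain ⟨ε, hε, hball⟩ := Metric.eventually_nhds_iff.1 (hcont.eventually_lt_const hlam)
  have hεS : ∀ v ∈ S, ε ≤ v := by
    intro v hv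
    by_contra hc
    push_neg at hc
    have : dist v 0 < ε := by
      rw [Real.dist_eq, sub_zero, abs_of_nonneg hv.1]
      exact hc
    exact absurd (hball this) (not_lt.2 hv.2.le)
  have hbddB : BddBelow S := ⟨ε, hεS⟩
  refine ⟨sInf S, sSup S, ?_, ?_, ?_, ?_⟩
  · exact lt_of_lt_of_le hε (le_csInf hS hεS)
  · exact Real.sInf_le_sSup _ hbddB hbddA
  · exact fun v hv => ⟨csInf_le hbddB hv, le_csSup hbddA hv⟩
  · intro v hv
    obtain ⟨v₁, hv₁S, hv₁⟩ := exists_lt_of_csInf_lt hS hv.1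
    obtain ⟨v₂, hv₂S, hv₂⟩ := exists_lt_of_lt_csSup hS hv.2
    exact ⟨hv₁S.1.trans hv₁.le, phi_quasi hn hv₁S.1 hv₁.le hv₂.le hv₁S.2 hv₂S.2⟩

/-- For a nonzero finite measure `ρ` on `(0,∞)` with Laplace transform `F = R_ρ`, and a
probability density `g` with all exponential moments such that `(F * g)(x) < ∞` everywhere,
setting `G = 𝒩(F * g)`, for every `n ≥ 1` the expected `n`-th gap of the Poisson process
with intensity `-dG` is at most that of the Poisson process with intensity `-dF`. -/
theorem expGap_mono_under_convolution
    (ρ : Measure ℝ) [IsFiniteMeasure ρ] (hρ0 : ρ ≠ 0) (hρsupp : ρ (Set.Iic 0) = 0)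
    (g : ℝ → ℝ) (hg_meas : Measurable g) (hg_nonneg : ∀ y, 0 ≤ g y)
    (hg_prob : ∫ y, g y = 1)
    (hg_exp : ∀ s : ℝ, (∫⁻ y, ENNReal.ofReal (Real.exp (s * y) * g y)) < ⊤)
    (hconv : ∀ x : ℝ, convT (laplaceT ρ) g x < ⊤) :
    ∀ n : ℕ, 1 ≤ n →
      expGap (normShiftT (convT (laplaceT ρ) g)) n ≤ expGap (laplaceT ρ) n := by
  intro n hn
  classical
  set W : ℝ → ℝ≥0∞ := fun u => ∫⁻ y, ENNReal.ofReal (Real.exp (u * y) * g y) with hWdef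
  set F : ℝ → ℝ≥0∞ := laplaceT ρ with hFdef
  set H : ℝ → ℝ≥0∞ := convT (laplaceT ρ) g with hHdef
  set z : ℝ := sSup {z : ℝ | 1 ≤ H z} with hzdef
  set G : ℝ → ℝ≥0∞ := fun t => H (t + z) with hGdef
  have hGnorm : normShiftT (convT (laplaceT ρ) g) = G := rfl
  rw [hGnorm]
  -- basic facts about g and W
  have hg_int : Integrable g := by
    by_contra h
    rw [integral_undef h] at hg_prob
    norm_num at hg_prob
  have hg1 : (∫⁻ y, ENNReal.ofReal (g y)) = 1 := by
    rw [← ofReal_integral_eq_lintegral_ofReal hg_int (ae_of_all _ hg_nonneg), hg_prob,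
      ENNReal.ofReal_one]
  have hW_meas : Measurable W := by
    have h : Measurable (fun p : ℝ × ℝ => ENNReal.ofReal (Real.exp (p.1 * p.2) * g p.2)) :=
      ((Real.measurable_exp.comp (measurable_fst.mul measurable_snd)).mul
        (hg_meas.comp measurable_snd)).ennreal_ofReal
    exact h.lintegral_prod_right'
  have hW_fin : ∀ u, W u ≠ ⊤ := fun u => (hg_exp u).ne
  have haeu : ∀ᵐ u ∂ρ, 0 < u := by
    rw [ae_iff]
    refine measure_mono_null (fun u hu => ?_) hρsupp
    simp only [mem_setOf_eq, not_lt] at hu ⊢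
    exact hu
  have hHrep : ∀ x, H x = ∫⁻ u, ENNReal.ofReal (Real.exp (-(x*u))) * W u ∂ρ :=
    fun x => conv_rep ρ g hg_meas x
  have hH_fin : ∀ x, H x ≠ ⊤ := fun x => (hconv x).ne
  have hG_fin : ∀ t, G t ≠ ⊤ := fun t => hH_fin (t + z)
  -- lower bound on W
  obtain ⟨R, hR0, hWlow⟩ : ∃ R : ℝ, 0 ≤ R ∧
      ∀ u : ℝ, 0 ≤ u → ENNReal.ofReal (Real.exp (-(u*R))) * 2⁻¹ ≤ W u := by
    have hind : ∀ m : ℕ, Measurable ((Ici (-(m:ℝ))).indicator (fun y => ENNReal.ofReal (g y))) :=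
      fun m => (hg_meas.ennreal_ofReal).indicator measurableSet_Ici
    have hmono : Monotone (fun m : ℕ => (Ici (-(m:ℝ))).indicator
        (fun y => ENNReal.ofReal (g y))) := by
      intro m m' hmm'
      refine indicator_le_indicator_of_subset (Ici_subset_Ici.2 ?_) (fun y => zero_le)
      exact neg_le_neg (Nat.cast_le.2 hmm')
    have hsup : ∀ y : ℝ, (⨆ m : ℕ, (Ici (-(m:ℝ))).indicator
        (fun y => ENNReal.ofReal (g y)) y) = ENNReal.ofReal (g y) := by
      intro y
      apply le_antisymm
      · exact iSup_le fun m => indicator_le_self _ _ y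
      · obtain ⟨m, hm⟩ := exists_nat_ge (-y)
        refine le_iSup_of_le m ?_
        rw [indicator_of_mem (mem_Ici.2 (neg_le.1 hm))]
    have hL : (⨆ m : ℕ, ∫⁻ y, (Ici (-(m:ℝ))).indicator
        (fun y => ENNReal.ofReal (g y)) y) = 1 := by
      rw [← lintegral_iSup hind hmono]
      rw [← hg1]
      apply lintegral_congr
      exact hsup
    have h2 : (2:ℝ≥0∞)⁻¹ < ⨆ m : ℕ, ∫⁻ y, (Ici (-(m:ℝ))).indicator
        (fun y => ENNReal.ofReal (g y)) y := by
      rw [hL]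
      norm_num
    obtain ⟨m, hm⟩ := lt_iSup_iff.1 h2
    rw [lintegral_indicator measurableSet_Ici] at hm
    refine ⟨(m:ℝ), Nat.cast_nonneg m, fun u hu => ?_⟩
    calc ENNReal.ofReal (Real.exp (-(u*(m:ℝ)))) * 2⁻¹
        ≤ ENNReal.ofReal (Real.exp (-(u*(m:ℝ))))
            * ∫⁻ y in Ici (-(m:ℝ)), ENNReal.ofReal (g y) := mul_le_mul_right hm.le _
      _ = ∫⁻ y in Ici (-(m:ℝ)), ENNReal.ofReal (Real.exp (-(u*(m:ℝ))))
            * ENNReal.ofReal (g y) := (lintegral_const_mul _ hg_meas.ennreal_ofReal).symm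
      _ ≤ ∫⁻ y in Ici (-(m:ℝ)), ENNReal.ofReal (Real.exp (u * y) * g y) := by
          refine setLIntegral_mono ((Real.measurable_exp.comp
            (measurable_const.mul measurable_id)).mul hg_meas).ennreal_ofReal fun y hy => ?_
          rw [← ENNReal.ofReal_mul (Real.exp_pos _).le]
          refine ENNReal.ofReal_le_ofReal (mul_le_mul_of_nonneg_right ?_ (hg_nonneg y))
          refine Real.exp_le_exp.2 ?_
          have := mem_Ici.1 hy
          nlinarith
      _ ≤ W u := setLIntegral_le_lintegral _ _
  -- a point of positive mass
  obtain ⟨ε, hε, hρε⟩ : ∃ ε : ℝ, 0 < ε ∧ 0 < ρ (Ici ε) := by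
    by_contra hc
    push_neg at hc
    have hnull : ∀ m : ℕ, ρ (Ici (1/((m:ℝ)+1))) = 0 := fun m =>
      le_antisymm (hc _ (by positivity)) (zero_le)
    have hU : Ioi (0:ℝ) ⊆ ⋃ m : ℕ, Ici (1/((m:ℝ)+1)) := by
      intro u hu
      obtain ⟨m, hm⟩ := exists_nat_one_div_lt (mem_Ioi.1 hu)
      exact mem_iUnion.2 ⟨m, mem_Ici.2 hm.le⟩
    have h1 : ρ (Ioi 0) = 0 :=
      measure_mono_null hU (measure_iUnion_null fun m => hnull m)
    have h2 : ρ univ = 0 := by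
      rw [← Iic_union_Ioi (a := (0:ℝ))]
      exact le_antisymm ((measure_union_le _ _).trans (by rw [hρsupp, h1]; simp)) (zero_le)
    exact hρ0 (Measure.measure_univ_eq_zero.1 h2)
  -- F finite
  have hF_fin : ∀ x, F x ≠ ⊤ := by
    intro x
    have hb : ∀ᵐ u ∂ρ, 2⁻¹ * ENNReal.ofReal (Real.exp (-(x * u)))
        ≤ ENNReal.ofReal (Real.exp (-((x-R)*u))) * W u := by
      refine haeu.mono fun u hu => ?_
      calc 2⁻¹ * ENNReal.ofReal (Real.exp (-(x * u)))
          = ENNReal.ofReal (Real.exp (-((x-R)*u)))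
              * (ENNReal.ofReal (Real.exp (-(u*R))) * 2⁻¹) := by
            rw [← mul_assoc, ← ENNReal.ofReal_mul (Real.exp_pos _).le, ← Real.exp_add]
            rw [mul_comm]
            congr 2
            ring
        _ ≤ ENNReal.ofReal (Real.exp (-((x-R)*u))) * W u := mul_le_mul_right (hWlow u hu.le) _
    have h1 : 2⁻¹ * (∫⁻ u, ENNReal.ofReal (Real.exp (-(x*u))) ∂ρ) ≤ H (x - R) := by
      rw [hHrep, ← lintegral_const_mul (f := fun u : ℝ => ENNReal.ofReal (Real.exp (-(x*u))))
        2⁻¹ (by exact (Real.measurable_exp.comp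
          ((measurable_const.mul measurable_id).neg)).ennreal_ofReal)]
      exact lintegral_mono_ae hb
    intro hcon
    have hcon' : (∫⁻ u, ENNReal.ofReal (Real.exp (-(x*u))) ∂ρ) = ⊤ := hcon
    rw [hcon', ENNReal.mul_top (by norm_num : (2⁻¹:ℝ≥0∞) ≠ 0)] at h1
    exact hH_fin _ (top_le_iff.1 h1)
  -- monotonicity
  have hF_anti : Antitone F := by
    intro x y hxy
    refine lintegral_mono_ae (haeu.mono fun u hu => ?_)
    exact ENNReal.ofReal_le_ofReal (Real.exp_le_exp.2 (by nlinarith))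
  have hH_anti : Antitone H := by
    intro x y hxy
    rw [hHrep, hHrep]
    refine lintegral_mono_ae (haeu.mono fun u hu => ?_)
    exact mul_le_mul_left (ENNReal.ofReal_le_ofReal (Real.exp_le_exp.2 (by nlinarith))) _
  have hG_anti : Antitone G := fun x y hxy => hH_anti (by linarith)
  have hF_strict : ∀ ⦃x y : ℝ⦄, x < y → F y < F x := by
    intro x y hxy
    refine lintegral_strict_mono hρ0 ?_ (hF_fin y) (haeu.mono fun u hu => ?_)
    · exact (Real.measurable_exp.comp ((measurable_const.mul measurable_id).neg)).ennreal_ofReal.aemeasurable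
    · exact ENNReal.ofReal_lt_ofReal_iff (Real.exp_pos _) |>.2
        (Real.exp_lt_exp.2 (by nlinarith))
  -- limits
  have hF_small : ∀ β : ℝ≥0∞, β ≠ 0 → ∃ x : ℝ, F x < β := by
    intro β hβ
    have hexp0 : ∀ u : ℝ, 0 < u →
        Tendsto (fun m : ℕ => ENNReal.ofReal (Real.exp (-((m:ℝ) * u)))) atTop (nhds 0) := by
      intro u hu
      have h1 : Tendsto (fun m : ℕ => (m:ℝ) * u) atTop atTop :=
        tendsto_natCast_atTop_atTop.atTop_mul_const hu
      have h2 : Tendsto (fun m : ℕ => -((m:ℝ) * u)) atTop atBot :=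
        tendsto_neg_atTop_atBot.comp h1
      have h3 : Tendsto (fun m : ℕ => Real.exp (-((m:ℝ) * u))) atTop (nhds 0) :=
        Real.tendsto_exp_atBot.comp h2
      have h4 := ENNReal.tendsto_ofReal (f := atTop)
        (m := fun m : ℕ => Real.exp (-((m:ℝ) * u))) h3
      simpa using h4
    have hlim : Tendsto (fun m : ℕ => F (m:ℝ)) atTop (nhds 0) := by
      have h0 : (∫⁻ _u, (1:ℝ≥0∞) ∂ρ) ≠ ⊤ := by
        rw [lintegral_one]
        exact measure_ne_top ρ univ
      have hdom := tendsto_lintegral_of_dominated_convergence (μ := ρ)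
        (F := fun (m : ℕ) (u : ℝ) => ENNReal.ofReal (Real.exp (-((m:ℝ) * u))))
        (f := fun _ => 0) (fun _u => (1:ℝ≥0∞))
        (fun m => (Real.measurable_exp.comp
          ((measurable_const.mul measurable_id).neg)).ennreal_ofReal)
        (fun m => haeu.mono fun u hu => by
          rw [← ENNReal.ofReal_one]
          exact ENNReal.ofReal_le_ofReal (Real.exp_le_one_iff.2
            (neg_nonpos.2 (mul_nonneg (Nat.cast_nonneg m) hu.le))))
        h0
        (haeu.mono fun u hu => hexp0 u hu)
      simpa [lintegral_zero, hFdef, laplaceT] using hdom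
    obtain ⟨m, hm⟩ := (hlim.eventually_lt_const (pos_iff_ne_zero.2 hβ)).exists
    exact ⟨(m:ℝ), hm⟩
  have hH_small : ∀ β : ℝ≥0∞, β ≠ 0 → ∃ x : ℝ, H x < β := by
    intro β hβ
    have hWint : (∫⁻ u, W u ∂ρ) = H 0 := by
      rw [hHrep 0]
      apply lintegral_congr
      intro u
      simp
    have hlim : Tendsto (fun m : ℕ => H (m:ℝ)) atTop (nhds 0) := by
      have h0 : (∫⁻ u, W u ∂ρ) ≠ ⊤ := by rw [hWint]; exact hH_fin 0
      have hdom := tendsto_lintegral_of_dominated_convergence (μ := ρ)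
        (F := fun (m : ℕ) (u : ℝ) => ENNReal.ofReal (Real.exp (-((m:ℝ) * u))) * W u)
        (f := fun _ => 0) (fun u => W u)
        (fun m => ((Real.measurable_exp.comp
          ((measurable_const.mul measurable_id).neg)).ennreal_ofReal).mul hW_meas)
        (fun m => haeu.mono fun u hu => by
          calc ENNReal.ofReal (Real.exp (-((m:ℝ) * u))) * W u ≤ 1 * W u := by
                refine mul_le_mul_left ?_ _
                rw [← ENNReal.ofReal_one]
                exact ENNReal.ofReal_le_ofReal (Real.exp_le_one_iff.2
                  (neg_nonpos.2 (mul_nonneg (Nat.cast_nonneg m) hu.le)))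
            _ = W u := one_mul _)
        h0
        (haeu.mono fun u hu => by
          have h1 : Tendsto (fun m : ℕ => (m:ℝ) * u) atTop atTop :=
            tendsto_natCast_atTop_atTop.atTop_mul_const hu
          have h3 : Tendsto (fun m : ℕ => Real.exp (-((m:ℝ) * u))) atTop (nhds 0) :=
            Real.tendsto_exp_atBot.comp (tendsto_neg_atTop_atBot.comp h1)
          have h4 := ENNReal.tendsto_ofReal (f := atTop)
            (m := fun m : ℕ => Real.exp (-((m:ℝ) * u))) h3
          have h5 := ENNReal.Tendsto.mul_const (b := W u) (by simpa using h4)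
            (Or.inr (hW_fin u))
          simpa using h5)
      have : ∀ m : ℕ, (∫⁻ u, ENNReal.ofReal (Real.exp (-((m:ℝ) * u))) * W u ∂ρ) = H (m:ℝ) :=
        fun m => (hHrep (m:ℝ)).symm
      simp only [lintegral_zero] at hdom
      exact Tendsto.congr this hdom
    obtain ⟨m, hm⟩ := (hlim.eventually_lt_const (pos_iff_ne_zero.2 hβ)).exists
    exact ⟨(m:ℝ), hm⟩
  have hG_small : ∀ β : ℝ≥0∞, β ≠ 0 → ∃ t : ℝ, G t < β := by
    intro β hβ
    obtain ⟨x, hx⟩ := hH_small β hβ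
    refine ⟨x - z, ?_⟩
    show H (x - z + z) < β
    rwa [sub_add_cancel]
  have hF_big : ∀ β : ℝ≥0∞, β ≠ ⊤ → ∃ x₀ : ℝ, ∀ x ≤ x₀, β ≤ F x := by
    intro β hβ
    have hFlow : ∀ x : ℝ, x ≤ 0 → ENNReal.ofReal (Real.exp (-(x*ε))) * ρ (Ici ε) ≤ F x := by
      intro x hx
      calc ENNReal.ofReal (Real.exp (-(x*ε))) * ρ (Ici ε)
          = ∫⁻ _u in Ici ε, ENNReal.ofReal (Real.exp (-(x*ε))) ∂ρ := (setLIntegral_const _ _).symm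
        _ ≤ ∫⁻ u in Ici ε, ENNReal.ofReal (Real.exp (-(x*u))) ∂ρ := by
            refine setLIntegral_mono (Real.measurable_exp.comp
              ((measurable_const.mul measurable_id).neg)).ennreal_ofReal fun u hu => ?_
            refine ENNReal.ofReal_le_ofReal (Real.exp_le_exp.2 ?_)
            have := mem_Ici.1 hu
            nlinarith
        _ ≤ F x := setLIntegral_le_lintegral _ _
    have htop : Tendsto (fun x : ℝ => ENNReal.ofReal (Real.exp (-(x*ε))) * ρ (Ici ε))
        atBot (nhds ⊤) := by
      have h1 : Tendsto (fun x : ℝ => -(x*ε)) atBot atTop :=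
        tendsto_neg_atBot_atTop.comp
          ((tendsto_id.atBot_mul_const hε : Tendsto (fun x : ℝ => x * ε) atBot atBot))
      have h2 : Tendsto (fun x : ℝ => ENNReal.ofReal (Real.exp (-(x*ε)))) atBot (nhds ⊤) :=
        ENNReal.tendsto_ofReal_atTop.comp (Real.tendsto_exp_atTop.comp h1)
      have h3 := ENNReal.Tendsto.mul_const (b := ρ (Ici ε)) h2 (Or.inl (by simp))
      rwa [ENNReal.top_mul hρε.ne'] at h3
    have hev : ∀ᶠ x in (atBot : Filter ℝ),
        β < ENNReal.ofReal (Real.exp (-(x*ε))) * ρ (Ici ε) ∧ x ≤ 0 :=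
      (htop.eventually_const_lt hβ.lt_top).and (eventually_le_atBot 0)
    obtain ⟨x₀, hx₀⟩ := hev.exists_forall_of_atBot
    exact ⟨x₀, fun x hx => ((hx₀ x hx).1.le.trans (hFlow x (hx₀ x hx).2))⟩
  have hG_big : ∀ β : ℝ≥0∞, β ≠ ⊤ → ∃ t : ℝ, β < G t := by
    intro β hβ
    have hHlow : ∀ x : ℝ, x + R ≤ 0 →
        ENNReal.ofReal (Real.exp (-((x+R)*ε))) * 2⁻¹ * ρ (Ici ε) ≤ H x := by
      intro x hx
      rw [hHrep]
      calc ENNReal.ofReal (Real.exp (-((x+R)*ε))) * 2⁻¹ * ρ (Ici ε)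
          = ∫⁻ _u in Ici ε, ENNReal.ofReal (Real.exp (-((x+R)*ε))) * 2⁻¹ ∂ρ :=
            (setLIntegral_const _ _).symm
        _ ≤ ∫⁻ u in Ici ε, ENNReal.ofReal (Real.exp (-(x*u))) * W u ∂ρ := by
            refine setLIntegral_mono ((Real.measurable_exp.comp
              ((measurable_const.mul measurable_id).neg)).ennreal_ofReal.mul hW_meas)
              fun u hu => ?_
            have hu' : ε ≤ u := mem_Ici.1 hu
            have hu0 : (0:ℝ) ≤ u := le_trans hε.le hu'
            calc ENNReal.ofReal (Real.exp (-((x+R)*ε))) * 2⁻¹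
                ≤ ENNReal.ofReal (Real.exp (-((x+R)*u))) * 2⁻¹ := by
                  refine mul_le_mul_left (ENNReal.ofReal_le_ofReal
                    (Real.exp_le_exp.2 ?_)) _
                  nlinarith
              _ = ENNReal.ofReal (Real.exp (-(x*u)))
                  * (ENNReal.ofReal (Real.exp (-(u*R))) * 2⁻¹) := by
                  rw [← mul_assoc, ← ENNReal.ofReal_mul (Real.exp_pos _).le, ← Real.exp_add]
                  congr 2
                  ring
              _ ≤ ENNReal.ofReal (Real.exp (-(x*u))) * W u :=
                  mul_le_mul_right (hWlow u hu0) _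
        _ ≤ ∫⁻ u, ENNReal.ofReal (Real.exp (-(x*u))) * W u ∂ρ :=
            setLIntegral_le_lintegral _ _
    have htop : Tendsto (fun x : ℝ => ENNReal.ofReal (Real.exp (-((x+R)*ε))) * 2⁻¹ * ρ (Ici ε))
        atBot (nhds ⊤) := by
      have h1 : Tendsto (fun x : ℝ => -((x+R)*ε)) atBot atTop :=
        tendsto_neg_atBot_atTop.comp
          (((tendsto_atBot_add_const_right atBot R tendsto_id).atBot_mul_const hε :
            Tendsto (fun x : ℝ => (x + R) * ε) atBot atBot))
      have h2 : Tendsto (fun x : ℝ => ENNReal.ofReal (Real.exp (-((x+R)*ε)))) atBot (nhds ⊤) :=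
        ENNReal.tendsto_ofReal_atTop.comp (Real.tendsto_exp_atTop.comp h1)
      have h3 := ENNReal.Tendsto.mul_const (b := (2⁻¹ : ℝ≥0∞)) h2 (Or.inl (by simp))
      rw [ENNReal.top_mul (by norm_num : (2⁻¹ : ℝ≥0∞) ≠ 0)] at h3
      have h4 := ENNReal.Tendsto.mul_const (b := ρ (Ici ε)) h3 (Or.inl (by simp))
      rwa [ENNReal.top_mul hρε.ne'] at h4
    have hev : ∀ᶠ x in (atBot : Filter ℝ),
        (β < ENNReal.ofReal (Real.exp (-((x+R)*ε))) * 2⁻¹ * ρ (Ici ε)) ∧ x + R ≤ 0 :=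
      (htop.eventually_const_lt hβ.lt_top).and
        (by
          have := eventually_le_atBot (-R)
          filter_upwards [this] with x hx
          linarith)
    obtain ⟨x, hx1, hx2⟩ := hev.exists
    refine ⟨x - z, ?_⟩
    show β < H (x - z + z)
    rw [sub_add_cancel]
    exact hx1.trans_le (hHlow x hx2)
  -- propagation
  have hprop : ∀ t s : ℝ, G t ≤ F s → ∀ d : ℝ, 0 ≤ d → G (t + d) ≤ F (s + d) := by
    intro t s hts d hd
    set A : ℝ → ℝ≥0∞ := fun u => ENNReal.ofReal (Real.exp (-((t + z) * u))) * W u with hAdef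
    set B : ℝ → ℝ≥0∞ := fun u => ENNReal.ofReal (Real.exp (-(s * u))) with hBdef
    have hA_meas : Measurable A := ((Real.measurable_exp.comp
      ((measurable_const.mul measurable_id).neg)).ennreal_ofReal).mul hW_meas
    have hB_meas : Measurable B := (Real.measurable_exp.comp
      ((measurable_const.mul measurable_id).neg)).ennreal_ofReal
    have hArep : ∀ x : ℝ, (∫⁻ u, ENNReal.ofReal (Real.exp (-(x * u))) * A u ∂ρ) = G (t + x) := by
      intro x
      show _ = H (t + x + z)
      rw [hHrep]
      apply lintegral_congr
      intro u
      rw [hAdef]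
      simp only
      rw [← mul_assoc, ← ENNReal.ofReal_mul (Real.exp_pos _).le, ← Real.exp_add]
      congr 3
      ring
    have hBrep : ∀ x : ℝ, (∫⁻ u, ENNReal.ofReal (Real.exp (-(x * u))) * B u ∂ρ) = F (s + x) := by
      intro x
      have hFrw : F (s + x) = ∫⁻ u, ENNReal.ofReal (Real.exp (-((s + x) * u))) ∂ρ := rfl
      rw [hFrw]
      apply lintegral_congr
      intro u
      rw [hBdef]
      simp only
      rw [← ENNReal.ofReal_mul (Real.exp_pos _).le, ← Real.exp_add]
      congr 2
      ring
    have hAB : (∫⁻ u, A u ∂ρ) ≤ ∫⁻ u, B u ∂ρ := by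
      have h0A : (∫⁻ u, A u ∂ρ) = G t := by
        have h := hArep 0
        simpa using h
      have h0B : (∫⁻ u, B u ∂ρ) = F s := by
        have h := hBrep 0
        simpa using h
      rw [h0A, h0B]
      exact hts
    set c : ℝ := t + z - s with hcdef
    have hBeq : ∀ u : ℝ, B u = ENNReal.ofReal (Real.exp (-((t + z) * u)))
        * ENNReal.ofReal (Real.exp (c * u)) := by
      intro u
      rw [hBdef]
      simp only
      rw [← ENNReal.ofReal_mul (Real.exp_pos _).le, ← Real.exp_add]
      congr 2
      rw [hcdef]
      ring
    have hABof : ∀ u : ℝ, W u ≤ ENNReal.ofReal (Real.exp (c * u)) → A u ≤ B u := by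
      intro u hWu
      rw [hBeq u]
      exact mul_le_mul_right hWu _
    have hBAof : ∀ u : ℝ, ENNReal.ofReal (Real.exp (c * u)) ≤ W u → B u ≤ A u := by
      intro u h
      rw [hBeq u]
      exact mul_le_mul_right h _
    by_cases hDall : ∀ u : ℝ, 0 < u → W u ≤ ENNReal.ofReal (Real.exp (c * u))
    · have hfin : (∫⁻ u, ENNReal.ofReal (Real.exp (-(d * u))) * A u ∂ρ)
          ≤ ∫⁻ u, ENNReal.ofReal (Real.exp (-(d * u))) * B u ∂ρ :=
        lintegral_mono_ae (haeu.mono fun u hu => mul_le_mul_right (hABof u (hDall u hu)) _)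
      rw [hArep d, hBrep d] at hfin
      exact hfin
    · push_neg at hDall
      obtain ⟨u₀, hu₀pos, hu₀⟩ := hDall
      set D := {u : ℝ | 0 < u ∧ W u ≤ ENNReal.ofReal (Real.exp (c * u))} with hDdef
      have hDdown : ∀ u w : ℝ, 0 < u → u ≤ w → w ∈ D → u ∈ D := fun u w hu huw hw =>
        ⟨hu, W_downclosed g hg_meas hg_nonneg hg1 c hu huw hw.2⟩
      have hDbddA : BddAbove D := by
        refine ⟨u₀, fun w hw => ?_⟩
        by_contra hc
        push_neg at hc
        exact absurd (hDdown u₀ w hu₀pos hc.le hw).2 (not_le.2 hu₀)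
      have hcross : ∀ u : ℝ, 0 < u →
          (u < sSup D → A u ≤ B u) ∧ (sSup D < u → B u ≤ A u) := by
        intro u hu
        constructor
        · intro h
          rcases D.eq_empty_or_nonempty with hD | hD
          · rw [hD, Real.sSup_empty] at h
            linarith
          · obtain ⟨w, hwD, hw⟩ := exists_lt_of_lt_csSup hD h
            exact hABof u (hDdown u w hu hw.le hwD).2
        · intro h
          have hnotD : u ∉ D := fun hmem => absurd (le_csSup hDbddA hmem) (not_le.2 h)
          have hWu : ¬ W u ≤ ENNReal.ofReal (Real.exp (c * u)) := fun hc' => hnotD ⟨hu, hc'⟩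
          exact hBAof u (le_of_not_ge hWu)
      have hBfin : (∫⁻ u, B u ∂ρ) ≠ ⊤ := by
        have h0B : (∫⁻ u, B u ∂ρ) = F s := by
          have h := hBrep 0
          simpa using h
        rw [h0B]
        exact hF_fin s
      have hfin := prop_lemma ρ hρsupp hA_meas hB_meas (sSup D) hcross hAB hBfin hd
      rw [hArep d, hBrep d] at hfin
      exact hfin
  -- layer cake
  have hG_meas : Measurable G := hG_anti.measurable
  have hF_meas : Measurable F := hF_anti.measurable
  have hkpos : (0:ℝ) < (Nat.factorial n : ℝ) := Nat.cast_pos.2 n.factorial_pos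
  have hfG_meas : AEMeasurable
      (fun t => (G t).toReal ^ n / (Nat.factorial n : ℝ) * Real.exp (-(G t).toReal)) volume := by
    apply Measurable.aemeasurable
    exact ((hG_meas.ennreal_toReal.pow_const n).div_const _).mul
      (Real.measurable_exp.comp hG_meas.ennreal_toReal.neg)
  have hfF_meas : AEMeasurable
      (fun t => (F t).toReal ^ n / (Nat.factorial n : ℝ) * Real.exp (-(F t).toReal)) volume := by
    apply Measurable.aemeasurable
    exact ((hF_meas.ennreal_toReal.pow_const n).div_const _).mul
      (Real.measurable_exp.comp hF_meas.ennreal_toReal.neg)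
  have hnn : ∀ (Φ : ℝ → ℝ≥0∞) (t : ℝ),
      (0:ℝ) ≤ (Φ t).toReal ^ n / (Nat.factorial n : ℝ) * Real.exp (-(Φ t).toReal) := by
    intro Φ t
    have := ENNReal.toReal_nonneg (a := Φ t)
    positivity
  show expGap G n ≤ expGap F n
  unfold expGap
  rw [lintegral_eq_lintegral_meas_lt volume (ae_of_all _ (hnn G)) hfG_meas,
    lintegral_eq_lintegral_meas_lt volume (ae_of_all _ (hnn F)) hfF_meas]
  refine lintegral_mono_ae ((ae_restrict_iff' measurableSet_Ioi).2 (ae_of_all _ fun lam hlam => ?_))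
  have hlam : (0:ℝ) < lam := hlam
  have hlam' : (0:ℝ) < lam * (Nat.factorial n : ℝ) := mul_pos hlam hkpos
  have hiff : ∀ v : ℝ,
      (lam < v ^ n / (Nat.factorial n : ℝ) * Real.exp (-v)) ↔
      (lam * (Nat.factorial n : ℝ) < v ^ n * Real.exp (-v)) := by
    intro v
    rw [div_mul_eq_mul_div, lt_div_iff₀ hkpos]
  rcases {v : ℝ | 0 ≤ v ∧ lam * (Nat.factorial n : ℝ) < v ^ n * Real.exp (-v)}.eq_empty_or_nonempty
    with hS | hS
  · have hempty : {a : ℝ | lam < (G a).toReal ^ n / (Nat.factorial n : ℝ)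
        * Real.exp (-(G a).toReal)} = ∅ := by
      rw [eq_empty_iff_forall_notMem]
      intro t ht
      rw [mem_setOf_eq] at ht
      have hv : (G t).toReal ∈ {v : ℝ | 0 ≤ v ∧
          lam * (Nat.factorial n : ℝ) < v ^ n * Real.exp (-v)} :=
        ⟨ENNReal.toReal_nonneg, (hiff _).1 ht⟩
      rw [hS] at hv
      exact hv
    rw [hempty]
    simp
  · obtain ⟨A, B, hA, hAB', hSIcc, hIooS⟩ := level_set_interval hn hlam' hS
    have hincl1 : {a : ℝ | lam < (G a).toReal ^ n / (Nat.factorial n : ℝ)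
        * Real.exp (-(G a).toReal)}
        ⊆ {t | ENNReal.ofReal A ≤ G t ∧ G t ≤ ENNReal.ofReal B} := by
      intro t ht
      rw [mem_setOf_eq] at ht
      have hv : (G t).toReal ∈ Icc A B := hSIcc ⟨ENNReal.toReal_nonneg, (hiff _).1 ht⟩
      constructor
      · rw [← ENNReal.ofReal_toReal (hG_fin t)]
        exact ENNReal.ofReal_le_ofReal hv.1
      · rw [← ENNReal.ofReal_toReal (hG_fin t)]
        exact ENNReal.ofReal_le_ofReal hv.2
    have hincl2 : {t | ENNReal.ofReal A < F t ∧ F t < ENNReal.ofReal B}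
        ⊆ {a : ℝ | lam < (F a).toReal ^ n / (Nat.factorial n : ℝ)
          * Real.exp (-(F a).toReal)} := by
      intro t ht
      obtain ⟨h1, h2⟩ := ht
      have hne : F t ≠ ⊤ := hF_fin t
      rw [← ENNReal.ofReal_toReal hne] at h1 h2
      have hv1 : A < (F t).toReal := (ENNReal.ofReal_lt_ofReal_iff_of_nonneg hA.le).1 h1
      have hv2 : (F t).toReal < B :=
        (ENNReal.ofReal_lt_ofReal_iff (hA.trans_le hAB')).1 h2
      have hmem := hIooS ⟨hv1, hv2⟩
      rw [mem_setOf_eq]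
      exact (hiff _).2 hmem.2
    calc volume {a : ℝ | lam < (G a).toReal ^ n / (Nat.factorial n : ℝ)
          * Real.exp (-(G a).toReal)}
        ≤ volume {t | ENNReal.ofReal A ≤ G t ∧ G t ≤ ENNReal.ofReal B} := measure_mono hincl1
      _ ≤ volume {t | ENNReal.ofReal A < F t ∧ F t < ENNReal.ofReal B} :=
          core_measure hF_anti hG_anti hF_strict hF_small hF_big hG_small hG_big hprop hA hAB'
      _ ≤ volume {a : ℝ | lam < (F a).toReal ^ n / (Nat.factorial n : ℝ)
          * Real.exp (-(F a).toReal)} := measure_mono hincl2
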